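/- Let Γ be a distance-regular graph with classical parameters (D, b, α, β) such that b ≥ 2 and D ≥ 3, and let r = [D]. Assume Γ has the PLS(γ) property for some γ ≥ 3. Then every vertex of Γ lies on at least r lines, and a vertex lies on exactly r lines if and only if it is a Delsarte vertex. -/

import Mathlib

open SimpleGraph

namespace DRGPaper

variable {V : Type*}

/-- `Γ` is a distance-regular graph with diameter `D` and intersection arrays `cc`, `aa`, `bb`:
`Γ` is connected of diameter `D` and for any vertices `x, y` at distance `i ≤ D`, `y` has exactly
`cc i` neighbours at distance `i - 1` from `x`, `aa i` neighbours at distance `i` from `x`,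
and `bb i` neighbours at distance `i + 1` from `x`. -/
def IsDRG [Fintype V] (G : SimpleGraph V) (D : ℕ) (cc aa bb : ℕ → ℕ) : Prop :=
  G.Connected ∧
  (∀ x y : V, G.dist x y ≤ D) ∧
  (∃ x y : V, G.dist x y = D) ∧
  ∀ i : ℕ, i ≤ D → ∀ x y : V, G.dist x y = i →
    {z : V | G.Adj y z ∧ G.dist x z = i - 1}.ncard = cc i ∧
    {z : V | G.Adj y z ∧ G.dist x z = i}.ncard = aa i ∧
    {z : V | G.Adj y z ∧ G.dist x z = i + 1}.ncard = bb i

/-- `[j] = (b^j - 1)/(b - 1) = 1 + b + ⋯ + b^(j-1)` as a real number. -/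
def gauss (b j : ℕ) : ℝ := ∑ i ∈ Finset.range j, (b : ℝ) ^ i

/-- `Γ` has classical parameters `(D, b, α, β)`: it is distance-regular of diameter `D` with
`bb i = ([D] - [i])(β - α[i])` for `0 ≤ i ≤ D - 1` and `cc i = [i](1 + α[i-1])` for
`1 ≤ i ≤ D`. -/
def HasClassicalParams [Fintype V] (G : SimpleGraph V) (D b : ℕ) (α β : ℝ)
    (cc aa bb : ℕ → ℕ) : Prop :=
  IsDRG G D cc aa bb ∧
  (∀ i : ℕ, i ≤ D - 1 → (bb i : ℝ) = (gauss b D - gauss b i) * (β - α * gauss b i)) ∧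
  (∀ i : ℕ, 1 ≤ i → i ≤ D → (cc i : ℝ) = gauss b i * (1 + α * gauss b (i - 1)))

/-- `d(x, C) = min {d(x, y) : y ∈ C}`. -/
noncomputable def distToSet (G : SimpleGraph V) (x : V) (C : Set V) : ℕ :=
  sInf (G.dist x '' C)

/-- A maximal clique of `G`. -/
def IsMaxClique (G : SimpleGraph V) (s : Set V) : Prop :=
  G.IsClique s ∧ ∀ t : Set V, G.IsClique t → s ⊆ t → t = s

/-- The lines for the PLS(γ) property: maximal cliques with at least `γ` vertices. -/
def plsLines (G : SimpleGraph V) (γ : ℕ) : Set (Set V) :=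
  {ℓ : Set V | IsMaxClique G ℓ ∧ γ ≤ ℓ.ncard}

/-- `G` is the point graph of the partial linear space with line set `L`: any two adjacent
vertices lie on exactly one common line of `L`. -/
def IsPointGraphOf (G : SimpleGraph V) (L : Set (Set V)) : Prop :=
  ∀ x y : V, G.Adj x y → ∃! ℓ : Set V, ℓ ∈ L ∧ x ∈ ℓ ∧ y ∈ ℓ

/-- A vertex is a Delsarte vertex (w.r.t. the line set `L` and classical parameter `β`) if all
lines through it have exactly `β + 1` vertices. -/
def IsDelsarteVertex (L : Set (Set V)) (β : ℝ) (x : V) : Prop :=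
  ∀ ℓ ∈ L, x ∈ ℓ → (ℓ.ncard : ℝ) = β + 1

/-- The lines for the SPLS(c, s) property: maximal cliques with at least
`a1 + 2 - (c - 1)(s - 1)` vertices. -/
def splsLines (G : SimpleGraph V) (a1 c s : ℕ) : Set (Set V) :=
  {ℓ : Set V | IsMaxClique G ℓ ∧ (a1 : ℤ) + 2 - ((c : ℤ) - 1) * ((s : ℤ) - 1) ≤ (ℓ.ncard : ℤ)}

/-- The SPLS(c, s) property: `G` is the point graph of the partial linear space whose lines are
the maximal cliques with at least `a1 + 2 - (c-1)(s-1)` vertices, `a1 ≥ (2s-1)(c-1)`, each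
vertex lies on at most `s` lines, and every point not on a line `ℓ` is collinear with at most
`c` points of `ℓ`.  SPLS(s) is the case `c = c₂`. -/
def HasSPLS (G : SimpleGraph V) (a1 c s : ℕ) : Prop :=
  1 ≤ c ∧ 2 ≤ s ∧
  (2 * (s : ℤ) - 1) * ((c : ℤ) - 1) ≤ (a1 : ℤ) ∧
  IsPointGraphOf G (splsLines G a1 c s) ∧
  (∀ x : V, {ℓ ∈ splsLines G a1 c s | x ∈ ℓ}.ncard ≤ s) ∧
  (∀ ℓ ∈ splsLines G a1 c s, ∀ x : V, x ∉ ℓ → {y ∈ ℓ | G.Adj x y}.ncard ≤ c)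

/-- `[x, y]`: the set of lines `ℓ ∈ L` through `x` such that `d(y, u) ≤ 2` for all `u ∈ ℓ`. -/
def lineXY (G : SimpleGraph V) (L : Set (Set V)) (x y : V) : Set (Set V) :=
  {ℓ ∈ L | x ∈ ℓ ∧ ∀ u ∈ ℓ, G.dist y u ≤ 2}

/-- `𝓒` witnesses that `G` is geometric with cliques of order `q`: every member of `𝓒` is a
clique with exactly `q` vertices and every edge of `G` lies in a unique member of `𝓒`. -/
def IsGeomLineSet (G : SimpleGraph V) (q : ℝ) (𝓒 : Set (Set V)) : Prop :=
  (∀ C ∈ 𝓒, G.IsClique C ∧ (C.ncard : ℝ) = q) ∧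
  ∀ x y : V, G.Adj x y → ∃! C : Set V, C ∈ 𝓒 ∧ x ∈ C ∧ y ∈ C

/-- `G` is geometric: there is a set of Delsarte cliques (cliques of the maximum order `q`)
such that every edge lies in a unique member. -/
def IsGeometric (G : SimpleGraph V) (q : ℝ) : Prop :=
  ∃ 𝓒 : Set (Set V), IsGeomLineSet G q 𝓒

/-- An assembly: a maximal clique which is not a line. -/
def IsAssembly (G : SimpleGraph V) (𝓒 : Set (Set V)) (M : Set V) : Prop :=
  IsMaxClique G M ∧ M ∉ 𝓒

/-- The dual Pasch axiom: for every pair of adjacent vertices `x, y`, the common neighbours of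
`x` and `y` outside the (any) line of `𝓒` through `x` and `y` form a clique. -/
def DualPasch (G : SimpleGraph V) (𝓒 : Set (Set V)) : Prop :=
  ∀ x y : V, G.Adj x y → ∀ ℓ ∈ 𝓒, x ∈ ℓ → y ∈ ℓ →
    G.IsClique {z : V | G.Adj x z ∧ G.Adj y z ∧ z ∉ ℓ}

/-- The `m × n` grid, i.e. the Cartesian product `K_m □ K_n`. -/
def gridGraph (m n : ℕ) : SimpleGraph (Fin m × Fin n) :=
  (⊤ : SimpleGraph (Fin m)).boxProd (⊤ : SimpleGraph (Fin n))

/-- The `A`-clique extension of a graph `H`: replace every vertex of `H` by a clique of size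
`A`, vertices in distinct cliques being adjacent exactly when the underlying vertices of `H`
are adjacent. -/
def cliqueExt {W : Type*} (H : SimpleGraph W) (A : ℕ) : SimpleGraph (W × Fin A) :=
  SimpleGraph.fromRel (fun p q => H.Adj p.1 q.1 ∨ p.1 = q.1)

/-- `θ` is an eigenvalue of the adjacency matrix of `G`. -/
def IsAdjEigenvalue [Fintype V] (G : SimpleGraph V) [DecidableRel G.Adj] (θ : ℝ) : Prop :=
  ∃ v : V → ℝ, v ≠ 0 ∧ (G.adjMatrix ℝ).mulVec v = θ • v

/-! ### Auxiliary lemmas -/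


lemma gauss_zero (b : ℕ) : gauss b 0 = 0 := by simp [gauss]

lemma gauss_succ (b j : ℕ) : gauss b (j+1) = gauss b j + (b:ℝ)^j := by
  simp [gauss, Finset.sum_range_succ]

lemma gauss_one (b : ℕ) : gauss b 1 = 1 := by simp [gauss]

lemma gauss_nonneg (b j : ℕ) : 0 ≤ gauss b j :=
  Finset.sum_nonneg fun i _ => by positivity

lemma gauss_strictMono {b : ℕ} (hb : 1 ≤ b) : StrictMono (gauss b) := by
  apply strictMono_nat_of_lt_succ
  intro n
  rw [gauss_succ]
  have : (0:ℝ) < (b:ℝ)^n := by positivity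
  linarith

lemma gauss_pos {b j : ℕ} (hb : 1 ≤ b) (hj : 1 ≤ j) : 0 < gauss b j := by
  have := gauss_strictMono hb (show 0 < j from hj)
  rwa [gauss_zero] at this

/-! ### geodesic lemmas -/

lemma dist_getVert_le {G : SimpleGraph V} (hc : G.Connected) {x y : V} (p : G.Walk x y)
    (i : ℕ) : G.dist x (p.getVert i) ≤ i := by
  induction p generalizing i with
  | nil => simp [Walk.getVert, SimpleGraph.dist_self]
  | @cons u v w h q ih =>
    cases i with
    | zero => simp [Walk.getVert, SimpleGraph.dist_self]
    | succ n =>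
      have h1 : G.dist u (q.getVert n) ≤ G.dist u v + G.dist v (q.getVert n) :=
        hc.dist_triangle
      have h2 : G.dist u v ≤ 1 := by
        rw [SimpleGraph.dist_eq_one_iff_adj.2 h]
      calc G.dist u ((Walk.cons h q).getVert (n+1)) = G.dist u (q.getVert n) := rfl
        _ ≤ G.dist u v + G.dist v (q.getVert n) := h1
        _ ≤ 1 + n := by have := ih n; omega
        _ = n + 1 := by omega

/-- On a geodesic from `x` to `y` of length `d`, the `i`-th vertex is at distance `i` from `x`
and `d - i` from `y`. -/
lemma exists_vertex_dist {G : SimpleGraph V} (hc : G.Connected) {x y : V} {d i : ℕ}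
    (hd : G.dist x y = d) (hi : i ≤ d) :
    ∃ z : V, G.dist x z = i ∧ G.dist z y = d - i := by
  obtain ⟨p, hp⟩ := hc.exists_walk_length_eq_dist x y
  rw [hd] at hp
  refine ⟨p.getVert i, ?_⟩
  have h1 : G.dist x (p.getVert i) ≤ i := dist_getVert_le hc p i
  have h2 : G.dist y (p.getVert i) ≤ d - i := by
    have := dist_getVert_le hc p.reverse (d - i)
    rwa [Walk.getVert_reverse, hp, show d - (d - i) = i by omega] at this
  have h3 : d ≤ G.dist x (p.getVert i) + G.dist (p.getVert i) y := by
    rw [← hd]; exact hc.dist_triangle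
  rw [SimpleGraph.dist_comm] at h2
  omega

/-! ### DRG facts -/

section DRGfacts

variable [Fintype V] {G : SimpleGraph V} {D : ℕ} {cc aa bb : ℕ → ℕ}

lemma IsDRG.exists_pair (h : IsDRG G D cc aa bb) {i : ℕ} (hi : i ≤ D) :
    ∃ x y : V, G.dist x y = i := by
  obtain ⟨x, y, hxy⟩ := h.2.2.1
  obtain ⟨z, hz, -⟩ := exists_vertex_dist h.1 hxy hi
  exact ⟨x, z, hz⟩

lemma IsDRG.degree (h : IsDRG G D cc aa bb) (x : V) :
    {z : V | G.Adj x z}.ncard = bb 0 := by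
  have h0 := (h.2.2.2 0 (Nat.zero_le D) x x (SimpleGraph.dist_self)).2.2
  have : {z : V | G.Adj x z ∧ G.dist x z = 0 + 1} = {z : V | G.Adj x z} := by
    ext z
    simp only [Set.mem_setOf_eq, zero_add, and_iff_left_iff_imp]
    exact fun hz => SimpleGraph.dist_eq_one_iff_adj.2 hz
  rwa [this] at h0

lemma IsDRG.cc_pos (h : IsDRG G D cc aa bb) {i : ℕ} (h1 : 1 ≤ i) (h2 : i ≤ D) :
    1 ≤ cc i := by
  obtain ⟨x, y, hxy⟩ := h.exists_pair h2
  obtain ⟨z, hz1, hz2⟩ := exists_vertex_dist h.1 hxy (show i - 1 ≤ i by omega)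
  rw [show i - (i-1) = 1 by omega] at hz2
  have hadj : G.Adj y z := (SimpleGraph.dist_eq_one_iff_adj.1 hz2).symm
  have hmem : z ∈ {z : V | G.Adj y z ∧ G.dist x z = i - 1} := ⟨hadj, hz1⟩
  have := (h.2.2.2 i h2 x y hxy).1
  rw [← this]
  exact (Set.ncard_pos (Set.toFinite _)).2 ⟨z, hmem⟩

lemma IsDRG.bb_pos (h : IsDRG G D cc aa bb) {i : ℕ} (h2 : i + 1 ≤ D) :
    1 ≤ bb i := by
  obtain ⟨x, w, hxw⟩ := h.exists_pair h2
  obtain ⟨z, hz1, hz2⟩ := exists_vertex_dist h.1 hxw (show i ≤ i + 1 by omega)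
  rw [show i + 1 - i = 1 by omega] at hz2
  have hadj : G.Adj z w := SimpleGraph.dist_eq_one_iff_adj.1 hz2
  have hmem : w ∈ {u : V | G.Adj z u ∧ G.dist x u = i + 1} := ⟨hadj, hxw⟩
  have := (h.2.2.2 i (by omega) x z hz1).2.2
  rw [← this]
  exact (Set.ncard_pos (Set.toFinite _)).2 ⟨w, hmem⟩

lemma IsDRG.bb_D (h : IsDRG G D cc aa bb) : bb D = 0 := by
  obtain ⟨x, y, hxy⟩ := h.2.2.1
  have := (h.2.2.2 D le_rfl x y hxy).2.2
  rw [← this]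
  have : {z : V | G.Adj y z ∧ G.dist x z = D + 1} = ∅ := by
    ext z
    simp only [Set.mem_setOf_eq, Set.mem_empty_iff_false, iff_false, not_and]
    intro _ hz
    have := h.2.1 x z
    omega
  simp [this]

lemma IsDRG.aa_zero (h : IsDRG G D cc aa bb) : aa 0 = 0 := by
  obtain ⟨x⟩ := h.1.nonempty
  have h0 := (h.2.2.2 0 (Nat.zero_le D) x x SimpleGraph.dist_self).2.1
  rw [← h0]
  have : {z : V | G.Adj x z ∧ G.dist x z = 0} = ∅ := by
    ext z
    simp only [Set.mem_setOf_eq, Set.mem_empty_iff_false, iff_false, not_and]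
    intro hz hd
    exact G.ne_of_adj hz ((h.1.dist_eq_zero_iff).1 hd)
  rw [this, Set.ncard_empty]

lemma IsDRG.cc_zero (h : IsDRG G D cc aa bb) : cc 0 = 0 := by
  obtain ⟨x⟩ := h.1.nonempty
  have h0 := (h.2.2.2 0 (Nat.zero_le D) x x SimpleGraph.dist_self).1
  rw [← h0]
  have : {z : V | G.Adj x z ∧ G.dist x z = 0 - 1} = ∅ := by
    ext z
    simp only [Nat.zero_sub, Set.mem_setOf_eq, Set.mem_empty_iff_false, iff_false, not_and]
    intro hz hd
    exact G.ne_of_adj hz ((h.1.dist_eq_zero_iff).1 hd)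
  rw [this, Set.ncard_empty]

lemma IsDRG.sum_eq (h : IsDRG G D cc aa bb) {i : ℕ} (h1 : 1 ≤ i) (h2 : i ≤ D) :
    cc i + aa i + bb i = bb 0 := by
  obtain ⟨x, y, hxy⟩ := h.exists_pair h2
  obtain ⟨hc, ha, hb⟩ := h.2.2.2 i h2 x y hxy
  have hdeg := h.degree y
  set S1 := {z : V | G.Adj y z ∧ G.dist x z = i - 1} with hS1
  set S2 := {z : V | G.Adj y z ∧ G.dist x z = i} with hS2
  set S3 := {z : V | G.Adj y z ∧ G.dist x z = i + 1} with hS3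
  have hunion : {z : V | G.Adj y z} = S1 ∪ S2 ∪ S3 := by
    ext z
    simp only [hS1, hS2, hS3, Set.mem_setOf_eq, Set.mem_union]
    constructor
    · intro hz
      have t1 : G.dist x z ≤ G.dist x y + G.dist y z := h.1.dist_triangle
      have t2 : G.dist x y ≤ G.dist x z + G.dist z y := h.1.dist_triangle
      have hyz : G.dist y z = 1 := SimpleGraph.dist_eq_one_iff_adj.2 hz
      have hzy : G.dist z y = 1 := by rw [SimpleGraph.dist_comm]; exact hyz
      rw [hxy] at t1 t2
      rw [hzy] at t2
      rw [hyz] at t1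
      rcases (show G.dist x z = i - 1 ∨ G.dist x z = i ∨ G.dist x z = i + 1 by omega) with
        hh | hh | hh
      · exact Or.inl (Or.inl ⟨hz, hh⟩)
      · exact Or.inl (Or.inr ⟨hz, hh⟩)
      · exact Or.inr ⟨hz, hh⟩
    · rintro ((⟨hz, -⟩ | ⟨hz, -⟩) | ⟨hz, -⟩) <;> exact hz
  have d12 : Disjoint S1 S2 := by
    rw [Set.disjoint_left]
    rintro z ⟨-, hz1⟩ ⟨-, hz2⟩
    omega
  have d123 : Disjoint (S1 ∪ S2) S3 := by
    rw [Set.disjoint_left]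
    rintro z (⟨-, hz1⟩ | ⟨-, hz1⟩) ⟨-, hz2⟩ <;> omega
  have e1 : (S1 ∪ S2 ∪ S3).ncard = S1.ncard + S2.ncard + S3.ncard := by
    rw [Set.ncard_union_eq d123 (Set.toFinite _) (Set.toFinite _),
      Set.ncard_union_eq d12 (Set.toFinite _) (Set.toFinite _)]
  rw [hunion, e1, hc, ha, hb] at hdeg
  omega

end DRGfacts
/-! ### cosine sequence -/

/-- Numerator product of the cosine sequence for the eigenvalue `-[D]`. -/
noncomputable def Pp (α : ℝ) (b i : ℕ) : ℝ := ∏ h ∈ Finset.range i, (1 + α * gauss b h)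

/-- Denominator product of the cosine sequence for the eigenvalue `-[D]`. -/
noncomputable def Qq (α β : ℝ) (b i : ℕ) : ℝ := ∏ h ∈ Finset.range i, (β - α * gauss b h)

/-- The cosine sequence for the eigenvalue `-[D]`. -/
noncomputable def uu (α β : ℝ) (b i : ℕ) : ℝ := (-1)^i * Pp α b i / Qq α β b i

lemma Pp_zero (α : ℝ) (b : ℕ) : Pp α b 0 = 1 := by simp [Pp]

lemma Pp_succ (α : ℝ) (b i : ℕ) : Pp α b (i+1) = Pp α b i * (1 + α * gauss b i) := by
  simp [Pp, Finset.prod_range_succ]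

lemma Qq_zero (α β : ℝ) (b : ℕ) : Qq α β b 0 = 1 := by simp [Qq]

lemma Qq_succ (α β : ℝ) (b i : ℕ) : Qq α β b (i+1) = Qq α β b i * (β - α * gauss b i) := by
  simp [Qq, Finset.prod_range_succ]

lemma uu_zero (α β : ℝ) (b : ℕ) : uu α β b 0 = 1 := by simp [uu, Pp_zero, Qq_zero]

lemma uu_one (α β : ℝ) (b : ℕ) : uu α β b 1 = -(1/β) := by
  simp [uu, Pp, Qq, gauss_zero, Finset.prod_range_one]
  ring

lemma Qq_pos {α β : ℝ} {b D : ℕ} (hQ : ∀ i, i ≤ D - 1 → 0 < β - α * gauss b i)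
    {i : ℕ} (hi : i ≤ D) (hD : 1 ≤ D) : 0 < Qq α β b i := by
  apply Finset.prod_pos
  intro h hh
  rw [Finset.mem_range] at hh
  exact hQ h (by omega)

/-- The three-term recurrence for the cosine sequence of `-[D]`, for `1 ≤ j = m+1 ≤ D`. -/
lemma cosine_rec {α β : ℝ} {b D : ℕ} (hD : 1 ≤ D)
    (hQ : ∀ i, i ≤ D - 1 → 0 < β - α * gauss b i)
    {m : ℕ} (hm : m + 1 ≤ D) {c a b' : ℝ}
    (hc : c = gauss b (m+1) * (1 + α * gauss b m))
    (hb' : b' = (gauss b D - gauss b (m+1)) * (β - α * gauss b (m+1)))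
    (ha : a = gauss b D * β - b' - c) :
    c * uu α β b m + a * uu α β b (m+1) + b' * uu α β b (m+2)
      = -(gauss b D) * uu α β b (m+1) := by
  have hQm : (0:ℝ) < Qq α β b m := Qq_pos hQ (by omega) hD
  have he : (0:ℝ) < β - α * gauss b m := hQ m (by omega)
  have h2 : uu α β b (m+1)
      = -((-1)^m * (Pp α b m * (1 + α * gauss b m)) / (Qq α β b m * (β - α * gauss b m))) := by
    rw [uu, Pp_succ, Qq_succ, pow_succ]
    ring
  have h3 : b' * uu α β b (m+2)
      = (-1)^m * ((gauss b D - gauss b (m+1)) * (Pp α b m * (1 + α * gauss b m)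
          * (1 + α * gauss b (m+1)))) / (Qq α β b m * (β - α * gauss b m)) := by
    rcases eq_or_lt_of_le hm with hEq | hLt
    · have hz : gauss b D - gauss b (m+1) = 0 := by rw [hEq]; ring
      rw [hb', hz]
      simp
    · have he2 : (0:ℝ) < β - α * gauss b (m+1) := hQ (m+1) (by omega)
      rw [uu, hb', Pp_succ, Pp_succ, Qq_succ, Qq_succ, pow_succ, pow_succ]
      rw [mul_div_assoc', div_eq_div_iff (mul_ne_zero (mul_ne_zero hQm.ne' he.ne') he2.ne')
        (mul_ne_zero hQm.ne' he.ne')]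
      ring
  rw [h2, h3, ha, hb', hc, uu]
  field_simp
  ring
/-! ### distance matrices -/

section Matrices

variable [Fintype V] {G : SimpleGraph V} {D : ℕ} {cc aa bb : ℕ → ℕ}

/-- The `i`-th distance matrix. -/
noncomputable def distMat (G : SimpleGraph V) (i : ℕ) : Matrix V V ℝ :=
  Matrix.of fun x y => if G.dist x y = i then 1 else 0

lemma distMat_apply (G : SimpleGraph V) (i : ℕ) (x y : V) :
    distMat G i x y = if G.dist x y = i then 1 else 0 := rfl

lemma distMat_zero [DecidableEq V] (hc : G.Connected) : distMat G 0 = (1 : Matrix V V ℝ) := by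
  classical
  ext x y
  rw [distMat_apply, Matrix.one_apply]
  by_cases hxy : x = y
  · simp [hxy, SimpleGraph.dist_self]
  · simp only [hxy, if_false]
    rw [if_neg]
    intro hd
    exact hxy ((hc.dist_eq_zero_iff).1 hd)

lemma distMat_one [DecidableRel G.Adj] : distMat G 1 = G.adjMatrix ℝ := by
  ext x y
  rw [distMat_apply, SimpleGraph.adjMatrix_apply]
  by_cases hxy : G.Adj x y
  · simp [hxy, SimpleGraph.dist_eq_one_iff_adj.2 hxy]
  · simp only [hxy, if_false]
    rw [if_neg]
    intro hd
    exact hxy (SimpleGraph.dist_eq_one_iff_adj.1 hd)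

/-- The key counting lemma: the number of neighbours of `x` at distance `i` from `y`. -/
lemma count_nbrs (h : IsDRG G D cc aa bb) (x y : V) (i : ℕ)
    [DecidablePred fun z => G.Adj x z ∧ G.dist y z = i] :
    (Finset.univ.filter fun z => G.Adj x z ∧ G.dist y z = i).card
      = (if G.dist y x = i + 1 then cc (G.dist y x) else 0)
        + (if i = G.dist y x then aa i else 0)
        + (if i = G.dist y x + 1 then bb (G.dist y x) else 0) := by
  classical
  set j := G.dist y x with hj
  have hjD : j ≤ D := h.2.1 y x
  have hcard : (Finset.univ.filter fun z => G.Adj x z ∧ G.dist y z = i).card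
      = {z : V | G.Adj x z ∧ G.dist y z = i}.ncard := by
    have : {z : V | G.Adj x z ∧ G.dist y z = i}
        = ↑(Finset.univ.filter fun z => G.Adj x z ∧ G.dist y z = i) := by
      ext z; simp
    rw [this, Set.ncard_coe_finset]
  obtain ⟨h1, h2, h3⟩ := h.2.2.2 j hjD y x hj.symm
  rcases (show j = i + 1 ∨ i = j ∨ i = j + 1 ∨ (j ≠ i + 1 ∧ i ≠ j ∧ i ≠ j + 1) by omega) with
    hcase | hcase | hcase | ⟨n1, n2, n3⟩
  · rw [if_pos hcase, if_neg (by omega), if_neg (by omega), hcard]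
    have hji : j - 1 = i := by omega
    rw [hji] at h1
    rw [h1]
    omega
  · rw [if_neg (by omega), if_pos hcase, if_neg (by omega), hcard, hcase, h2]
    omega
  · rw [if_neg (by omega), if_neg (by omega), if_pos hcase, hcard, hcase, h3]
    omega
  · rw [if_neg n1, if_neg n2, if_neg n3, hcard]
    have : {z : V | G.Adj x z ∧ G.dist y z = i} = ∅ := by
      ext z
      simp only [Set.mem_setOf_eq, Set.mem_empty_iff_false, iff_false, not_and]
      intro hz hd
      have t1 : G.dist y z ≤ G.dist y x + G.dist x z := h.1.dist_triangle
      have t2 : G.dist y x ≤ G.dist y z + G.dist z x := h.1.dist_triangle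
      have e1 : G.dist x z = 1 := SimpleGraph.dist_eq_one_iff_adj.2 hz
      have e2 : G.dist z x = 1 := by rw [SimpleGraph.dist_comm]; exact e1
      rw [e1] at t1; rw [e2] at t2
      omega
    rw [this]
    simp

end Matrices
section Matrices2

set_option linter.unusedSectionVars false

variable [Fintype V] {G : SimpleGraph V} {D : ℕ} {cc aa bb : ℕ → ℕ}

lemma adj_mul_distMat (h : IsDRG G D cc aa bb) [DecidableRel G.Adj] (i : ℕ) (x y : V) :
    (G.adjMatrix ℝ * distMat G i) x y
      = (if G.dist y x = i + 1 then (cc (G.dist y x) : ℝ) else 0)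
        + (if i = G.dist y x then (aa i : ℝ) else 0)
        + (if i = G.dist y x + 1 then (bb (G.dist y x) : ℝ) else 0) := by
  classical
  rw [SimpleGraph.adjMatrix_mul_apply]
  have e1 : G.neighborFinset x = Finset.univ.filter (G.Adj x) := by
    ext z; simp
  have e2 : ∑ u ∈ G.neighborFinset x, distMat G i u y
      = ((Finset.univ.filter fun z => G.Adj x z ∧ G.dist y z = i).card : ℝ) := by
    rw [e1, Finset.sum_filter, Finset.card_filter]
    push_cast
    apply Finset.sum_congr rfl
    intro u _
    rw [distMat_apply]
    by_cases h1 : G.Adj x u <;> by_cases h2 : G.dist u y = i <;>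
      have h2' : (G.dist y u = i) ↔ (G.dist u y = i) := by
        rw [SimpleGraph.dist_comm]
    all_goals simp [h1, h2, h2']
  rw [e2, count_nbrs h x y i]
  push_cast
  split_ifs <;> norm_num

lemma adj_mul_distMat_succ (h : IsDRG G D cc aa bb) [DecidableRel G.Adj] (m : ℕ) :
    G.adjMatrix ℝ * distMat G (m+1)
      = (cc (m+2) : ℝ) • distMat G (m+2) + (aa (m+1) : ℝ) • distMat G (m+1)
        + (bb m : ℝ) • distMat G m := by
  classical
  ext x y
  rw [adj_mul_distMat h (m+1) x y]
  simp only [Matrix.add_apply, Matrix.smul_apply, distMat_apply, smul_eq_mul]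
  rw [show G.dist y x = G.dist x y from SimpleGraph.dist_comm]
  generalize G.dist x y = d
  by_cases h1 : d = m + 2
  · rw [if_pos (show d = m+1+1 by omega), if_neg (show ¬ (m+1 = d) by omega),
      if_neg (show ¬ (m+1 = d+1) by omega), if_pos h1,
      if_neg (show ¬ (d = m+1) by omega), if_neg (show ¬ (d = m) by omega), h1]
    ring
  by_cases h2 : d = m + 1
  · rw [if_neg (show ¬ (d = m+1+1) by omega), if_pos (show m+1 = d by omega),
      if_neg (show ¬ (m+1 = d+1) by omega), if_neg (show ¬ (d = m+2) by omega),
      if_pos h2, if_neg (show ¬ (d = m) by omega)]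
    ring
  by_cases h3 : d = m
  · rw [if_neg (show ¬ (d = m+1+1) by omega), if_neg (show ¬ (m+1 = d) by omega),
      if_pos (show m+1 = d+1 by omega), if_neg (show ¬ (d = m+2) by omega),
      if_neg (show ¬ (d = m+1) by omega), if_pos h3, h3]
    ring
  · rw [if_neg (show ¬ (d = m+1+1) by omega), if_neg (show ¬ (m+1 = d) by omega),
      if_neg (show ¬ (m+1 = d+1) by omega), if_neg (show ¬ (d = m+2) by omega),
      if_neg (show ¬ (d = m+1) by omega), if_neg (show ¬ (d = m) by omega)]
    ring

lemma distMat_poly (h : IsDRG G D cc aa bb) [DecidableRel G.Adj] [DecidableEq V] :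
    ∀ i, i ≤ D → ∃ p : Polynomial ℝ, Polynomial.aeval (G.adjMatrix ℝ) p = distMat G i := by
  classical
  have key : ∀ m, m ≤ D - 1 →
      (∃ p : Polynomial ℝ, Polynomial.aeval (G.adjMatrix ℝ) p = distMat G m) ∧
      (∃ p : Polynomial ℝ, Polynomial.aeval (G.adjMatrix ℝ) p = distMat G (m+1)) := by
    intro m
    induction m with
    | zero =>
      intro _
      constructor
      · exact ⟨1, by rw [map_one, distMat_zero h.1]⟩
      · exact ⟨Polynomial.X, by rw [Polynomial.aeval_X, distMat_one]⟩
    | succ n ih =>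
      intro hn
      have ihn := ih (by omega)
      refine ⟨ihn.2, ?_⟩
      obtain ⟨p, hp⟩ := ihn.1
      obtain ⟨q, hq⟩ := ihn.2
      have hD1 : 1 ≤ D := by omega
      have hcpos : (0:ℝ) < (cc (n+2) : ℝ) := by
        have := h.cc_pos (show 1 ≤ n+2 by omega) (show n+2 ≤ D by omega)
        exact_mod_cast Nat.lt_of_lt_of_le Nat.zero_lt_one this
      have hrec := adj_mul_distMat_succ h n
      refine ⟨Polynomial.C ((cc (n+2):ℝ)⁻¹) * (Polynomial.X * q
        - Polynomial.C ((aa (n+1):ℝ)) * q - Polynomial.C ((bb n:ℝ)) * p), ?_⟩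
      rw [map_mul, map_sub, map_sub, map_mul, map_mul, map_mul, Polynomial.aeval_X,
        Polynomial.aeval_C, Polynomial.aeval_C, Polynomial.aeval_C, hp, hq,
        ← Algebra.smul_def, ← Algebra.smul_def, ← Algebra.smul_def, hrec]
      rw [smul_sub, smul_sub, smul_add, smul_add, smul_smul, smul_smul, smul_smul,
        inv_mul_cancel₀ hcpos.ne', one_smul]
      abel
  intro i hi
  cases i with
  | zero => exact ⟨1, by rw [map_one, distMat_zero h.1]⟩
  | succ n => exact (key n (by omega)).2

end Matrices2
section QMatrix

set_option linter.unusedSectionVars false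

variable [Fintype V] {G : SimpleGraph V} {D : ℕ} {cc aa bb : ℕ → ℕ}

/-- The (scaled) minimal idempotent for the eigenvalue `-[D]`. -/
noncomputable def QMat (G : SimpleGraph V) (D : ℕ) (α β : ℝ) (b : ℕ) : Matrix V V ℝ :=
  ∑ i ∈ Finset.range (D+1), uu α β b i • distMat G i

lemma QMat_apply {α β : ℝ} {b : ℕ} (hdle : ∀ x y : V, G.dist x y ≤ D) (x y : V) :
    QMat G D α β b x y = uu α β b (G.dist x y) := by
  classical
  rw [QMat, Matrix.sum_apply]
  have step : ∀ i ∈ Finset.range (D+1), (uu α β b i • distMat G i) x y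
      = if G.dist x y = i then uu α β b i else 0 := by
    intro i _
    rw [Matrix.smul_apply, distMat_apply, smul_eq_mul]
    split_ifs <;> ring
  rw [Finset.sum_congr rfl step, Finset.sum_ite_eq (Finset.range (D+1)) (G.dist x y)]
  rw [if_pos (Finset.mem_range.2 (by have := hdle x y; omega))]

lemma QMat_symm {α β : ℝ} {b : ℕ} (hdle : ∀ x y : V, G.dist x y ≤ D) (x y : V) :
    QMat G D α β b x y = QMat G D α β b y x := by
  rw [QMat_apply hdle, QMat_apply hdle, SimpleGraph.dist_comm]

/-- `A · Q = θ • Q` where `θ = -[D]`. -/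
lemma adj_mul_QMat [DecidableRel G.Adj] {α β : ℝ} {b : ℕ}
    (h : IsDRG G D cc aa bb) (hD : 1 ≤ D)
    (hu0 : (bb 0 : ℝ) * uu α β b 1 = -(gauss b D) * uu α β b 0)
    (huS : ∀ m, m + 1 ≤ D →
      (cc (m+1) : ℝ) * uu α β b m + (aa (m+1) : ℝ) * uu α β b (m+1)
        + (bb (m+1) : ℝ) * uu α β b (m+2) = -(gauss b D) * uu α β b (m+1)) :
    G.adjMatrix ℝ * QMat G D α β b = (-(gauss b D)) • QMat G D α β b := by
  classical
  ext x y
  have hdle := h.2.1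
  rw [Matrix.smul_apply, QMat_apply hdle, smul_eq_mul]
  rw [QMat, Finset.mul_sum, Matrix.sum_apply]
  have step : ∀ i ∈ Finset.range (D+1),
      (G.adjMatrix ℝ * uu α β b i • distMat G i) x y
        = uu α β b i * (if G.dist y x = i + 1 then (cc (G.dist y x) : ℝ) else 0)
          + uu α β b i * (if i = G.dist y x then (aa i : ℝ) else 0)
          + uu α β b i * (if i = G.dist y x + 1 then (bb (G.dist y x) : ℝ) else 0) := by
    intro i _
    rw [Matrix.mul_smul, Matrix.smul_apply, adj_mul_distMat h i x y, smul_eq_mul]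
    ring
  rw [Finset.sum_congr rfl step]
  rw [show G.dist y x = G.dist x y from SimpleGraph.dist_comm]
  set j := G.dist x y with hj
  have hjD : j ≤ D := hdle x y
  rw [Finset.sum_add_distrib, Finset.sum_add_distrib]
  have T2 : (∑ i ∈ Finset.range (D+1), uu α β b i * if i = j then (aa i : ℝ) else 0)
      = uu α β b j * (aa j : ℝ) := by
    rw [Finset.sum_eq_single j]
    · rw [if_pos rfl]
    · intro i _ hne
      rw [if_neg hne, mul_zero]
    · intro habs
      exact absurd (Finset.mem_range.2 (by omega)) habs
  rw [T2]
  by_cases hj0 : j = 0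
  · -- j = 0
    rw [hj0]
    have T1 : (∑ i ∈ Finset.range (D+1), uu α β b i * if 0 = i + 1 then (cc 0 : ℝ) else 0)
        = 0 := by
      apply Finset.sum_eq_zero
      intro i _
      rw [if_neg (by omega), mul_zero]
    have T3 : (∑ i ∈ Finset.range (D+1), uu α β b i * if i = 0 + 1 then (bb 0 : ℝ) else 0)
        = uu α β b 1 * (bb 0 : ℝ) := by
      rw [Finset.sum_eq_single 1]
      · rw [if_pos rfl]
      · intro i _ hne
        rw [if_neg (by omega), mul_zero]
      · intro habs
        exact absurd (Finset.mem_range.2 (by omega)) habs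
    rw [T1, T3, h.aa_zero]
    push_cast
    rw [mul_comm] at hu0
    rw [hu0]
    ring
  · -- j = m + 1
    obtain ⟨m, hm⟩ := Nat.exists_eq_succ_of_ne_zero hj0
    rw [hm]
    have hmD : m + 1 ≤ D := by omega
    have T1 : (∑ i ∈ Finset.range (D+1), uu α β b i * if m + 1 = i + 1 then (cc (m+1) : ℝ) else 0)
        = uu α β b m * (cc (m+1) : ℝ) := by
      rw [Finset.sum_eq_single m]
      · rw [if_pos rfl]
      · intro i _ hne
        rw [if_neg (by omega), mul_zero]
      · intro habs
        exact absurd (Finset.mem_range.2 (by omega)) habs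
    have T3 : (∑ i ∈ Finset.range (D+1), uu α β b i * if i = (m+1) + 1 then (bb (m+1) : ℝ) else 0)
        = (bb (m+1) : ℝ) * uu α β b (m+2) := by
      by_cases hmD' : m + 1 = D
      · have hbbz : bb (m+1) = 0 := by rw [hmD']; exact h.bb_D
        rw [hbbz, Nat.cast_zero, zero_mul]
        apply Finset.sum_eq_zero
        intro i _
        split_ifs <;> ring
      · rw [Finset.sum_eq_single (m+2)]
        · rw [if_pos rfl, mul_comm]
        · intro i _ hne
          rw [if_neg (by omega), mul_zero]
        · intro habs
          exact absurd (Finset.mem_range.2 (by omega)) habs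
    rw [T1, T3]
    have h1 := huS m hmD
    rw [mul_comm ((cc (m+1) : ℝ)), mul_comm ((aa (m+1) : ℝ))] at h1
    exact h1

end QMatrix

section Eigen

/-- Powers of `A` act on `Q` by powers of the eigenvalue. -/
lemma pow_mul_eigen {n' : Type*} [Fintype n'] [DecidableEq n'] {A Q : Matrix n' n' ℝ} {θ : ℝ}
    (hAQ : A * Q = θ • Q) : ∀ n : ℕ, A ^ n * Q = (θ ^ n) • Q := by
  intro n
  induction n with
  | zero => simp
  | succ n ih =>
    rw [pow_succ, mul_assoc, hAQ, Matrix.mul_smul, ih, smul_smul, pow_succ]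
    ring_nf

/-- Polynomials in `A` act on `Q` by evaluation at the eigenvalue. -/
lemma aeval_mul_eigen {n' : Type*} [Fintype n'] [DecidableEq n'] {A Q : Matrix n' n' ℝ} {θ : ℝ}
    (hAQ : A * Q = θ • Q) (p : Polynomial ℝ) :
    (Polynomial.aeval A p) * Q = (p.eval θ) • Q := by
  induction p using Polynomial.induction_on' with
  | add p q hp hq => rw [map_add, add_mul, hp, hq, Polynomial.eval_add, add_smul]
  | monomial n a =>
    rw [Polynomial.aeval_monomial, Polynomial.eval_monomial, ← Algebra.smul_def,
      smul_mul_assoc, pow_mul_eigen hAQ n, smul_smul]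

end Eigen
section Quad

/-- Quadratic-form nonnegativity for a symmetric matrix with `Q² = λQ`, `λ > 0`. -/
lemma quad_nonneg {n' : Type*} [Fintype n'] {Q : Matrix n' n' ℝ} {lam : ℝ}
    (hsym : ∀ x y, Q x y = Q y x) (hQQ : Q * Q = lam • Q) (hlam : 0 < lam) (s : Finset n') :
    0 ≤ ∑ x ∈ s, ∑ y ∈ s, Q x y := by
  have key : lam * (∑ x ∈ s, ∑ y ∈ s, Q x y)
      = ∑ z : n', (∑ x ∈ s, Q x z) * (∑ x ∈ s, Q x z) := by
    calc lam * (∑ x ∈ s, ∑ y ∈ s, Q x y)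
        = ∑ x ∈ s, ∑ y ∈ s, lam * Q x y := by
          rw [Finset.mul_sum]
          exact Finset.sum_congr rfl fun x _ => Finset.mul_sum _ _ _
      _ = ∑ x ∈ s, ∑ y ∈ s, (Q * Q) x y := by
          apply Finset.sum_congr rfl
          intro x _
          apply Finset.sum_congr rfl
          intro y _
          rw [hQQ, Matrix.smul_apply, smul_eq_mul]
      _ = ∑ x ∈ s, ∑ y ∈ s, ∑ z : n', Q x z * Q y z := by
          apply Finset.sum_congr rfl
          intro x _
          apply Finset.sum_congr rfl
          intro y _
          rw [Matrix.mul_apply]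
          exact Finset.sum_congr rfl fun z _ => by rw [hsym z y]
      _ = ∑ z : n', ∑ x ∈ s, ∑ y ∈ s, Q x z * Q y z := by
          rw [Finset.sum_congr rfl (fun x (_ : x ∈ s) => (Finset.sum_comm :
            (∑ y ∈ s, ∑ z : n', Q x z * Q y z) = ∑ z : n', ∑ y ∈ s, Q x z * Q y z)),
            Finset.sum_comm]
      _ = ∑ z : n', (∑ x ∈ s, Q x z) * (∑ x ∈ s, Q x z) := by
          apply Finset.sum_congr rfl
          intro z _
          rw [Finset.sum_mul_sum]
  have h2 : 0 ≤ lam * (∑ x ∈ s, ∑ y ∈ s, Q x y) := by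
    rw [key]
    exact Finset.sum_nonneg fun z _ => mul_self_nonneg _
  exact nonneg_of_mul_nonneg_right h2 hlam

/-- The Delsarte clique bound, in quadratic-form formulation. -/
lemma clique_bound {V : Type*} [Fintype V] {G : SimpleGraph V} {Q : Matrix V V ℝ} {β : ℝ}
    (hβ : 0 < β)
    (hquad : ∀ s : Finset V, 0 ≤ ∑ x ∈ s, ∑ y ∈ s, Q x y)
    (hdiag : ∀ x, Q x x = 1)
    (hadj : ∀ x y : V, G.Adj x y → Q x y = -(1/β))
    {s : Set V} (hs : G.IsClique s) : (s.ncard : ℝ) ≤ β + 1 := by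
  classical
  set t : Finset V := (Set.toFinite s).toFinset with ht
  have hcard : s.ncard = t.card := Set.ncard_eq_toFinset_card s (Set.toFinite s)
  rcases Nat.eq_zero_or_pos t.card with h0 | hpos
  · rw [hcard, h0]
    push_cast
    linarith
  have hrow : ∀ x ∈ t, (∑ y ∈ t, Q x y) = 1 + ((t.card : ℝ) - 1) * (-(1/β)) := by
    intro x hx
    rw [← Finset.add_sum_erase t _ hx, hdiag x]
    have : ∀ y ∈ t.erase x, Q x y = -(1/β) := by
      intro y hy
      have hyx : y ≠ x := Finset.ne_of_mem_erase hy
      have hxs : x ∈ s := by rw [ht] at hx; exact (Set.Finite.mem_toFinset _).1 hx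
      have hys : y ∈ s := by
        have := Finset.mem_of_mem_erase hy
        rw [ht] at this; exact (Set.Finite.mem_toFinset _).1 this
      exact hadj x y (hs hxs hys (Ne.symm hyx))
    rw [Finset.sum_congr rfl this, Finset.sum_const, Finset.card_erase_of_mem hx]
    have : ((t.card - 1 : ℕ) : ℝ) = (t.card : ℝ) - 1 := by
      have : 1 ≤ t.card := hpos
      push_cast [this]
      ring
    rw [nsmul_eq_mul, this]
  have htot : (∑ x ∈ t, ∑ y ∈ t, Q x y)
      = (t.card : ℝ) * (1 + ((t.card : ℝ) - 1) * (-(1/β))) := by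
    rw [Finset.sum_congr rfl hrow, Finset.sum_const, nsmul_eq_mul]
  have hq := hquad t
  rw [htot] at hq
  have hcpos : (0:ℝ) < (t.card : ℝ) := by exact_mod_cast hpos
  have h3 : 0 ≤ 1 + ((t.card : ℝ) - 1) * (-(1/β)) := nonneg_of_mul_nonneg_right ?_ hcpos
  · rw [hcard]
    have h5 : β * (1 + ((t.card : ℝ) - 1) * (-(1/β))) = β - ((t.card : ℝ) - 1) := by
      field_simp
      ring
    have h4 := mul_nonneg hβ.le h3
    rw [h5] at h4
    linarith
  · linarith [hq]

end Quad
section Lines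

variable [Fintype V] {G : SimpleGraph V} {γ : ℕ}

/-- The neighbourhood of `x` is partitioned by the punctured lines through `x`. -/
lemma lines_sum_eq_degree (hpls : IsPointGraphOf G (plsLines G γ)) (x : V)
    (F : Finset (Set V)) (hFmem : ∀ ℓ : Set V, ℓ ∈ F ↔ ℓ ∈ plsLines G γ ∧ x ∈ ℓ) :
    ∑ ℓ ∈ F, (ℓ \ {x}).ncard = {z : V | G.Adj x z}.ncard := by
  classical
  have hclique : ∀ ℓ ∈ F, G.IsClique ℓ := fun ℓ h => ((hFmem ℓ).1 h).1.1.1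
  have hxmem : ∀ ℓ ∈ F, x ∈ ℓ := fun ℓ h => ((hFmem ℓ).1 h).2
  set t : Set V → Finset V := fun ℓ => (Set.toFinite (ℓ \ {x})).toFinset with ht
  have hadj_of_mem : ∀ ℓ ∈ F, ∀ z ∈ t ℓ, G.Adj x z := by
    intro ℓ hℓ z hz
    rw [ht, Set.Finite.mem_toFinset, Set.mem_diff, Set.mem_singleton_iff] at hz
    exact hclique ℓ hℓ (hxmem ℓ hℓ) hz.1 (fun hc => hz.2 hc.symm)
  have hdisj : ∀ ℓ1 ∈ F, ∀ ℓ2 ∈ F, ℓ1 ≠ ℓ2 → Disjoint (t ℓ1) (t ℓ2) := by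
    intro ℓ1 h1 ℓ2 h2 hne
    rw [Finset.disjoint_left]
    intro z hz1 hz2
    have hadj : G.Adj x z := hadj_of_mem ℓ1 h1 z hz1
    obtain ⟨u, -, huniq⟩ := hpls x z hadj
    have hz1' : z ∈ ℓ1 := by
      rw [ht, Set.Finite.mem_toFinset] at hz1; exact hz1.1
    have hz2' : z ∈ ℓ2 := by
      rw [ht, Set.Finite.mem_toFinset] at hz2; exact hz2.1
    have e1 : ℓ1 = u := huniq ℓ1 ⟨((hFmem ℓ1).1 h1).1, hxmem ℓ1 h1, hz1'⟩
    have e2 : ℓ2 = u := huniq ℓ2 ⟨((hFmem ℓ2).1 h2).1, hxmem ℓ2 h2, hz2'⟩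
    exact hne (e1.trans e2.symm)
  have hU : F.biUnion t = (Set.toFinite {z : V | G.Adj x z}).toFinset := by
    ext z
    rw [Finset.mem_biUnion, Set.Finite.mem_toFinset, Set.mem_setOf_eq]
    constructor
    · rintro ⟨ℓ, hℓ, hz⟩
      exact hadj_of_mem ℓ hℓ z hz
    · intro hadj
      obtain ⟨u, ⟨hu, hxu, hzu⟩, -⟩ := hpls x z hadj
      refine ⟨u, (hFmem u).2 ⟨hu, hxu⟩, ?_⟩
      rw [ht, Set.Finite.mem_toFinset, Set.mem_diff, Set.mem_singleton_iff]
      exact ⟨hzu, fun hc => G.ne_of_adj hadj hc.symm⟩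
  have hcards : ∀ ℓ ∈ F, (ℓ \ {x}).ncard = (t ℓ).card := by
    intro ℓ _
    rw [ht]
    exact Set.ncard_eq_toFinset_card _ _
  rw [Finset.sum_congr rfl hcards, ← Finset.card_biUnion hdisj, hU]
  exact (Set.ncard_eq_toFinset_card _ _).symm

end Lines

/-- if `Γ` has classical parameters `(D, b, α, β)`, `b ≥ 2`, `D ≥ 3`, and the
PLS(γ) property for some `γ ≥ 3`, then every vertex lies on at least `r = [D]` lines, with
equality exactly for the Delsarte vertices. -/
theorem statement_3 {V : Type*} [Fintype V] (G : SimpleGraph V) (D b : ℕ) (α β : ℝ)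
    (cc aa bb : ℕ → ℕ) (hb : 2 ≤ b) (hD : 3 ≤ D)
    (h : HasClassicalParams G D b α β cc aa bb)
    (γ : ℕ) (hγ : 3 ≤ γ) (hpls : IsPointGraphOf G (plsLines G γ)) :
    ∀ x : V,
      gauss b D ≤ ({ℓ ∈ plsLines G γ | x ∈ ℓ}.ncard : ℝ) ∧
      (({ℓ ∈ plsLines G γ | x ∈ ℓ}.ncard : ℝ) = gauss b D ↔
        IsDelsarteVertex (plsLines G γ) β x) := by
  classical
  obtain ⟨hdrg, hbform, hcform⟩ := h
  have hconn := hdrg.1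
  have hdle := hdrg.2.1
  have hD1 : 1 ≤ D := by omega
  have hb1 : 1 ≤ b := by omega
  have hgDpos : 0 < gauss b D := gauss_pos hb1 (by omega)
  have hbb0 : (bb 0 : ℝ) = gauss b D * β := by
    have e := hbform 0 (by omega)
    rw [gauss_zero] at e
    rw [e]; ring
  have hbb0pos : (0:ℝ) < (bb 0 : ℝ) := by
    have := hdrg.bb_pos (show 0+1 ≤ D by omega)
    exact_mod_cast this
  have hβpos : 0 < β := by
    by_contra hneg
    push_neg at hneg
    nlinarith
  -- positivity of the denominators of the cosine sequence
  have hQpos : ∀ i, i ≤ D - 1 → 0 < β - α * gauss b i := by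
    intro i hi
    have hbbi : (bb i : ℝ) = (gauss b D - gauss b i) * (β - α * gauss b i) := hbform i hi
    have hbbipos : (0:ℝ) < (bb i : ℝ) := by
      have := hdrg.bb_pos (show i+1 ≤ D by omega)
      exact_mod_cast this
    have hgdiff : 0 < gauss b D - gauss b i := by
      have := gauss_strictMono hb1 (show i < D by omega)
      linarith
    by_contra hne
    push_neg at hne
    nlinarith
  -- the cosine-sequence recurrences
  have hu0 : (bb 0 : ℝ) * uu α β b 1 = -(gauss b D) * uu α β b 0 := by
    rw [uu_one, uu_zero, hbb0]
    field_simp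
  have huS : ∀ m, m + 1 ≤ D →
      (cc (m+1) : ℝ) * uu α β b m + (aa (m+1) : ℝ) * uu α β b (m+1)
        + (bb (m+1) : ℝ) * uu α β b (m+2) = -(gauss b D) * uu α β b (m+1) := by
    intro m hm
    have hc : (cc (m+1) : ℝ) = gauss b (m+1) * (1 + α * gauss b m) := by
      have e := hcform (m+1) (by omega) hm
      rwa [show (m+1) - 1 = m by omega] at e
    have hb' : (bb (m+1) : ℝ) = (gauss b D - gauss b (m+1)) * (β - α * gauss b (m+1)) := by
      by_cases hcase : m + 1 ≤ D - 1
      · exact hbform (m+1) hcase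
      · have hmD : m + 1 = D := by omega
        rw [hmD, hdrg.bb_D]
        push_cast
        ring
    have ha : (aa (m+1) : ℝ) = gauss b D * β - (bb (m+1) : ℝ) - (cc (m+1) : ℝ) := by
      have hsum := hdrg.sum_eq (show 1 ≤ m+1 by omega) hm
      have e : (cc (m+1) : ℝ) + (aa (m+1) : ℝ) + (bb (m+1) : ℝ) = (bb 0 : ℝ) := by
        exact_mod_cast hsum
      rw [hbb0] at e
      linarith
    exact cosine_rec hD1 hQpos hm hc hb' ha
  -- the Q matrix
  have hAQ : G.adjMatrix ℝ * QMat G D α β b = (-(gauss b D)) • QMat G D α β b :=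
    adj_mul_QMat hdrg hD1 hu0 huS
  have hpolyQ : ∃ q : Polynomial ℝ, Polynomial.aeval (G.adjMatrix ℝ) q = QMat G D α β b := by
    have hstep : ∀ i : ℕ, ∃ p : Polynomial ℝ,
        (i ≤ D → Polynomial.aeval (G.adjMatrix ℝ) p = distMat G i) := by
      intro i
      by_cases hi : i ≤ D
      · obtain ⟨p, hp⟩ := distMat_poly hdrg i hi
        exact ⟨p, fun _ => hp⟩
      · exact ⟨0, fun hc => absurd hc hi⟩
    choose pfun hpfun using hstep
    refine ⟨∑ i ∈ Finset.range (D+1), Polynomial.C (uu α β b i) * pfun i, ?_⟩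
    rw [map_sum, QMat]
    apply Finset.sum_congr rfl
    intro i hi
    rw [map_mul, Polynomial.aeval_C, ← Algebra.smul_def,
      hpfun i (by have := Finset.mem_range.1 hi; omega)]
  obtain ⟨q, hq⟩ := hpolyQ
  set lam : ℝ := Polynomial.eval (-(gauss b D)) q with hlamdef
  have hQQ : QMat G D α β b * QMat G D α β b = lam • QMat G D α β b := by
    have e := aeval_mul_eigen hAQ q
    rwa [hq] at e
  have hQap : ∀ u w : V, QMat G D α β b u w = uu α β b (G.dist u w) := QMat_apply hdle
  have hdiag : ∀ u : V, QMat G D α β b u u = 1 := fun u => by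
    rw [hQap, SimpleGraph.dist_self, uu_zero]
  have hsym : ∀ u w : V, QMat G D α β b u w = QMat G D α β b w u := QMat_symm hdle
  -- the eigenvalue of Q on itself is positive
  have hnV : Nonempty V := hconn.nonempty
  have hnpos : 0 < (Fintype.card V : ℝ) := by
    have := Fintype.card_pos (α := V)
    exact_mod_cast this
  have htrQ : ∑ u : V, QMat G D α β b u u = (Fintype.card V : ℝ) := by
    rw [Finset.sum_congr rfl (fun u _ => hdiag u), Finset.sum_const, nsmul_eq_mul,
      Finset.card_univ, mul_one]
  have htrace : lam * (Fintype.card V : ℝ) = ∑ u : V, ∑ w : V, (QMat G D α β b u w)^2 := by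
    have h1 : ∑ u : V, (QMat G D α β b * QMat G D α β b) u u
        = ∑ u : V, ∑ w : V, (QMat G D α β b u w)^2 := by
      apply Finset.sum_congr rfl
      intro u _
      rw [Matrix.mul_apply]
      apply Finset.sum_congr rfl
      intro w _
      rw [hsym w u]; ring
    have h2 : ∑ u : V, (QMat G D α β b * QMat G D α β b) u u
        = lam * (Fintype.card V : ℝ) := by
      rw [← htrQ, Finset.mul_sum]
      apply Finset.sum_congr rfl
      intro u _
      rw [hQQ, Matrix.smul_apply, smul_eq_mul]
    rw [← h2, h1]
  have hlampos : 0 < lam := by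
    have hge : (Fintype.card V : ℝ) ≤ ∑ u : V, ∑ w : V, (QMat G D α β b u w)^2 := by
      have hrow : ∀ u : V, (1:ℝ) ≤ ∑ w : V, (QMat G D α β b u w)^2 := by
        intro u
        have hs := Finset.single_le_sum (f := fun w => (QMat G D α β b u w)^2)
          (fun w _ => sq_nonneg _) (Finset.mem_univ u)
        simp only [hdiag u, one_pow] at hs
        exact hs
      calc (Fintype.card V : ℝ) = ∑ _u : V, (1:ℝ) := by
            rw [Finset.sum_const, nsmul_eq_mul, Finset.card_univ, mul_one]
        _ ≤ _ := Finset.sum_le_sum (fun u _ => hrow u)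
    nlinarith
  -- quadratic form bound and clique bound
  have hquad := quad_nonneg hsym hQQ hlampos
  have hadjQ : ∀ u w : V, G.Adj u w → QMat G D α β b u w = -(1/β) := by
    intro u w huw
    rw [hQap, SimpleGraph.dist_eq_one_iff_adj.2 huw, uu_one]
  have hcbound : ∀ {s : Set V}, G.IsClique s → (s.ncard : ℝ) ≤ β + 1 :=
    fun hs => clique_bound hβpos hquad hdiag hadjQ hs
  -- final counting at each vertex
  intro x
  set L : Set (Set V) := {ℓ ∈ plsLines G γ | x ∈ ℓ} with hLdef
  set F : Finset (Set V) := (Set.toFinite L).toFinset with hFdef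
  have hFmem : ∀ ℓ : Set V, ℓ ∈ F ↔ ℓ ∈ plsLines G γ ∧ x ∈ ℓ := by
    intro ℓ
    rw [hFdef, Set.Finite.mem_toFinset, hLdef, Set.mem_sep_iff]
  have hLcard : L.ncard = F.card := Set.ncard_eq_toFinset_card L (Set.toFinite L)
  have hsum := lines_sum_eq_degree hpls x F hFmem
  rw [hdrg.degree x] at hsum
  have hline : ∀ ℓ ∈ F, ((ℓ \ {x}).ncard : ℝ) = (ℓ.ncard : ℝ) - 1 := by
    intro ℓ hℓ
    have hx : x ∈ ℓ := ((hFmem ℓ).1 hℓ).2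
    have h1 : (ℓ \ {x}).ncard + 1 = ℓ.ncard := Set.ncard_diff_singleton_add_one hx (Set.toFinite _)
    rw [← h1]
    push_cast
    ring
  have hlinele : ∀ ℓ ∈ F, ((ℓ \ {x}).ncard : ℝ) ≤ β := by
    intro ℓ hℓ
    have hclique : G.IsClique ℓ := ((hFmem ℓ).1 hℓ).1.1.1
    have := hcbound hclique
    rw [hline ℓ hℓ]
    linarith
  have hsumR : ∑ ℓ ∈ F, ((ℓ \ {x}).ncard : ℝ) = gauss b D * β := by
    rw [← hbb0, ← hsum]
    push_cast
    ring
  constructor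
  · -- the lower bound
    have hle : gauss b D * β ≤ (F.card : ℝ) * β := by
      rw [← hsumR]
      calc ∑ ℓ ∈ F, ((ℓ \ {x}).ncard : ℝ) ≤ ∑ _ℓ ∈ F, β := Finset.sum_le_sum hlinele
        _ = (F.card : ℝ) * β := by rw [Finset.sum_const, nsmul_eq_mul]
    have := (mul_le_mul_iff_of_pos_right hβpos).1 hle
    rw [hLcard]
    exact_mod_cast this
  · constructor
    · -- equality implies Delsarte vertex
      intro heq
      intro ℓ hℓ hxℓ
      have hℓF : ℓ ∈ F := (hFmem ℓ).2 ⟨hℓ, hxℓ⟩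
      by_contra hne
      have hlt : ((ℓ \ {x}).ncard : ℝ) < β := by
        rcases lt_or_eq_of_le (hlinele ℓ hℓF) with hlt | heq2
        · exact hlt
        · exfalso
          apply hne
          rw [hline ℓ hℓF] at heq2
          linarith
      have hstrict : ∑ ℓ' ∈ F, ((ℓ' \ {x}).ncard : ℝ) < (F.card : ℝ) * β := by
        have := Finset.sum_lt_sum hlinele ⟨ℓ, hℓF, hlt⟩
        calc ∑ ℓ' ∈ F, ((ℓ' \ {x}).ncard : ℝ) < ∑ _ℓ' ∈ F, β := this
          _ = (F.card : ℝ) * β := by rw [Finset.sum_const, nsmul_eq_mul]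
      rw [hsumR] at hstrict
      rw [hLcard] at heq
      have hFc : (F.card : ℝ) = gauss b D := by exact_mod_cast heq
      rw [hFc] at hstrict
      linarith
    · -- Delsarte vertex implies equality
      intro hdel
      have hall : ∑ ℓ ∈ F, ((ℓ \ {x}).ncard : ℝ) = (F.card : ℝ) * β := by
        have : ∀ ℓ ∈ F, ((ℓ \ {x}).ncard : ℝ) = β := by
          intro ℓ hℓ
          have hmem := (hFmem ℓ).1 hℓ
          have := hdel ℓ hmem.1 hmem.2
          rw [hline ℓ hℓ, this]
          ring
        rw [Finset.sum_congr rfl this, Finset.sum_const, nsmul_eq_mul]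
      rw [hsumR] at hall
      have hFc : (F.card : ℝ) = gauss b D :=
        mul_right_cancel₀ hβpos.ne' hall.symm
      rw [hLcard]
      exact_mod_cast hFc

end DRGPaper
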